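/- arXiv:1812.03499 — 2 statements merged into one kernel-verified Lean document; each statement's English description precedes it below -/
import Mathlib

section
/- Let T ∈ B(H) with N(T*) ⊆ N(T) and canonical polar decomposition T = V|T|. Then for every n ∈ ℕ, the n-th mean transform iterate satisfies T̂^{(n)} = (1/2ⁿ) V (∑_{j=0}^{n} C(n,j) (V*)^j |T| V^j). -/
open ContinuousLinearMap Filter Topology

structure PolarDecomp {H : Type*} [NormedAddCommGroup H] [InnerProductSpace ℂ H]
    [CompleteSpace H] (T : H →L[ℂ] H) where
  V : H →L[ℂ] H
  R : H →L[ℂ] H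
  posR : R.IsPositive
  sqR : R * R = adjoint T * T
  partIso : V * adjoint V * V = V
  kerV : LinearMap.ker (V : H →ₗ[ℂ] H) = LinearMap.ker (T : H →ₗ[ℂ] H)
  factor : T = V * R

noncomputable def PolarDecomp.mean {H : Type*} [NormedAddCommGroup H] [InnerProductSpace ℂ H]
    [CompleteSpace H] {T : H →L[ℂ] H} (P : PolarDecomp T) : H →L[ℂ] H :=
  (2⁻¹ : ℂ) • (P.V * P.R + P.R * P.V)


open scoped Classical in
noncomputable def meanTransform {H : Type*} [NormedAddCommGroup H] [InnerProductSpace ℂ H]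
    [CompleteSpace H] (T : H →L[ℂ] H) : H →L[ℂ] H :=
  if h : Nonempty (PolarDecomp T) then h.some.mean else 0

/-!
Write `Sₙ = ∑ⱼ C(n,j) (V*)ʲ |T| Vʲ`. The projection `V*V` fixes `|T|` and `V*`, hence `Sₙ`, and
`|T| ≤ Sₙ` forces `ker Sₙ = ker |T| = ker V`; so `(V, 2⁻ⁿ Sₙ)` is a polar decomposition of
`2⁻ⁿ V Sₙ`, and by uniqueness it is the one the mean transform uses. The hypothesis
`ker T* ⊆ ker T` gives `V V V* = V`, so `V V*` fixes `(V*)ʲ |T| Vʲ`, i.e.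
`(V*)ʲ |T| Vʲ · V = V · (V*)ʲ⁺¹ |T| Vʲ⁺¹`. Thus `V Sₙ + Sₙ V = V Sₙ₊₁` by Pascal's rule, which
is the induction step.
-/

section BinomialConjSum

variable {α : Type*} [Semiring α]

def binomialConjSum (W R V : α) (n : ℕ) : α :=
  ∑ j ∈ Finset.range (n + 1), n.choose j • (W ^ j * R * V ^ j)

lemma mul_pow_mul_mul_pow_of_mul_eq {E W R : α} (hW : E * W = W) (hR : E * R = R) (V : α)
    (j : ℕ) : E * (W ^ j * R * V ^ j) = W ^ j * R * V ^ j := by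
  cases j with
  | zero => simpa using hR
  | succ j => simp only [pow_succ', ← mul_assoc, hW]

lemma mul_binomialConjSum_of_mul_eq {E W R : α} (hW : E * W = W) (hR : E * R = R) (V : α)
    (n : ℕ) : E * binomialConjSum W R V n = binomialConjSum W R V n := by
  simp only [binomialConjSum, Finset.mul_sum, mul_smul_comm,
    mul_pow_mul_mul_pow_of_mul_eq hW hR]

lemma pow_mul_mul_pow_mul_eq_mul_pow_succ {V W R : α} (hW : V * W * W = W) (hR : V * W * R = R)
    (j : ℕ) : W ^ j * R * V ^ j * V = V * (W ^ (j + 1) * R * V ^ (j + 1)) := by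
  calc W ^ j * R * V ^ j * V = V * W * (W ^ j * R * V ^ j) * V := by
        rw [mul_pow_mul_mul_pow_of_mul_eq hW hR]
    _ = V * (W ^ (j + 1) * R * V ^ (j + 1)) := by
        rw [pow_succ' W, pow_succ V]; simp only [mul_assoc]

theorem mul_binomialConjSum_add_binomialConjSum_mul {V W R : α} (hW : V * W * W = W)
    (hR : V * W * R = R) (n : ℕ) :
    V * binomialConjSum W R V n + binomialConjSum W R V n * V =
      V * binomialConjSum W R V (n + 1) := by
  rw [binomialConjSum, binomialConjSum,
    Finset.sum_choose_succ_nsmul (fun i _ => W ^ i * R * V ^ i) n, mul_add]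
  congr 1
  rw [Finset.sum_mul, Finset.mul_sum]
  refine Finset.sum_congr rfl fun j _ => ?_
  rw [smul_mul_assoc, pow_mul_mul_pow_mul_eq_mul_pow_succ hW hR, mul_smul_comm]

end BinomialConjSum

section StarOrderedRing

variable {α : Type*} [Semiring α] [PartialOrder α] [StarRing α] [StarOrderedRing α]

lemma le_binomialConjSum {R : α} (hR : 0 ≤ R) (V : α) (n : ℕ) :
    R ≤ binomialConjSum (star V) R V n := by
  have hterm (j : ℕ) : 0 ≤ n.choose j • (star V ^ j * R * V ^ j) :=
    nsmul_nonneg (by simpa only [star_pow] using star_left_conjugate_nonneg hR (V ^ j)) _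
  simpa [binomialConjSum] using
    Finset.single_le_sum (fun j _ => hterm j) (Finset.mem_range.2 n.succ_pos)

lemma binomialConjSum_nonneg {R : α} (hR : 0 ≤ R) (V : α) (n : ℕ) :
    0 ≤ binomialConjSum (star V) R V n :=
  hR.trans (le_binomialConjSum hR V n)

end StarOrderedRing

namespace ContinuousLinearMap

variable {H : Type*} [NormedAddCommGroup H] [InnerProductSpace ℂ H] [CompleteSpace H]

lemma apply_eq_zero_of_le_of_apply_eq_zero {R S : H →L[ℂ] H} (hR : 0 ≤ R) (hRS : R ≤ S) {x : H}
    (hx : S x = 0) : R x = 0 := by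
  set q := CFC.sqrt R
  have hqq : adjoint q * q = R := by
    rw [← star_eq_adjoint, (CFC.sqrt_nonneg R).isSelfAdjoint.star_eq, CFC.sqrt_mul_sqrt_self R hR]
  have hqx : ‖q x‖ ^ 2 ≤ 0 := by
    have := ((le_def R S).1 hRS).re_inner_nonneg_left x
    rw [apply_norm_sq_eq_inner_adjoint_left, ← mul_def, hqq]
    simpa [hx, inner_sub_left] using this
  have : q x = 0 := by simpa using hqx
  rw [← hqq, mul_apply_eq_comp, this, map_zero]

end ContinuousLinearMap

namespace PolarDecomp

variable {H : Type*} [NormedAddCommGroup H] [InnerProductSpace ℂ H] [CompleteSpace H]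
  {T : H →L[ℂ] H} (P : PolarDecomp T)

lemma adjoint_R : adjoint P.R = P.R :=
  isSelfAdjoint_iff'.1 P.posR.isSelfAdjoint

lemma R_nonneg : 0 ≤ P.R :=
  (nonneg_iff_isPositive _).2 P.posR

lemma V_apply_eq_zero_iff {x : H} : P.V x = 0 ↔ T x = 0 := by
  simpa using SetLike.ext_iff.1 P.kerV x

lemma R_apply_eq_zero_iff {x : H} : P.R x = 0 ↔ T x = 0 := by
  have key (A : H →L[ℂ] H) : A x = 0 ↔ (adjoint A * A) x = 0 := by
    simpa using (SetLike.ext_iff.1 (ker_adjoint_comp_self A) x).symm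
  rw [key, P.adjoint_R, P.sqR, ← key]

lemma adjoint_V_mul_V_mul_adjoint_V : adjoint P.V * P.V * adjoint P.V = adjoint P.V := by
  simpa [← star_eq_adjoint, star_mul, mul_assoc] using congrArg star P.partIso

lemma R_mul_adjoint_V_mul_V : P.R * (adjoint P.V * P.V) = P.R := by
  ext x
  have h : P.V (adjoint P.V (P.V x) - x) = 0 := by
    rw [map_sub, ← mul_apply_eq_comp, ← mul_apply_eq_comp, P.partIso, sub_self]
  simpa [sub_eq_zero] using P.R_apply_eq_zero_iff.2 (P.V_apply_eq_zero_iff.1 h)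

lemma adjoint_V_mul_V_mul_R : adjoint P.V * P.V * P.R = P.R := by
  simpa [← star_eq_adjoint, star_mul, mul_assoc, P.posR.isSelfAdjoint.star_eq] using
    congrArg star P.R_mul_adjoint_V_mul_V

lemma adjoint_eq_R_mul_adjoint_V : adjoint T = P.R * adjoint P.V := by
  conv_lhs => rw [P.factor]
  rw [← star_eq_adjoint, star_mul, P.posR.isSelfAdjoint.star_eq, star_eq_adjoint]

lemma V_mul_V_mul_adjoint_V
    (hker : LinearMap.ker ((adjoint T : H →L[ℂ] H) : H →ₗ[ℂ] H) ≤ LinearMap.ker (T : H →ₗ[ℂ] H)) :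
    P.V * P.V * adjoint P.V = P.V := by
  ext y
  -- `V V* y - y ∈ ker V* ⊆ ker T* ⊆ ker T = ker V`
  have hV : adjoint P.V (P.V (adjoint P.V y) - y) = 0 := by
    rw [map_sub, ← mul_apply_eq_comp, ← mul_apply_eq_comp, P.adjoint_V_mul_V_mul_adjoint_V,
      sub_self]
  have hT : adjoint T (P.V (adjoint P.V y) - y) = 0 := by
    rw [P.adjoint_eq_R_mul_adjoint_V, mul_apply_eq_comp, hV, map_zero]
  simpa [sub_eq_zero] using P.V_apply_eq_zero_iff.2 (hker hT)

lemma V_mul_adjoint_V_mul_adjoint_V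
    (hker : LinearMap.ker ((adjoint T : H →L[ℂ] H) : H →ₗ[ℂ] H) ≤ LinearMap.ker (T : H →ₗ[ℂ] H)) :
    P.V * adjoint P.V * adjoint P.V = adjoint P.V := by
  simpa [← star_eq_adjoint, star_mul, mul_assoc] using congrArg star (P.V_mul_V_mul_adjoint_V hker)

lemma V_mul_adjoint_V_mul_R
    (hker : LinearMap.ker ((adjoint T : H →L[ℂ] H) : H →ₗ[ℂ] H) ≤ LinearMap.ker (T : H →ₗ[ℂ] H)) :
    P.V * adjoint P.V * P.R = P.R :=
  calc P.V * adjoint P.V * P.R = P.V * adjoint P.V * (adjoint P.V * P.V * P.R) := by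
        rw [P.adjoint_V_mul_V_mul_R]
    _ = P.V * adjoint P.V * adjoint P.V * P.V * P.R := by simp only [mul_assoc]
    _ = P.R := by rw [P.V_mul_adjoint_V_mul_adjoint_V hker, P.adjoint_V_mul_V_mul_R]

def ofPartialIsometry (V S : H →L[ℂ] H) (hT : T = V * S) (hV : V * adjoint V * V = V)
    (hS : S.IsPositive) (hVS : adjoint V * V * S = S) (hker : ∀ x, S x = 0 ↔ V x = 0) :
    PolarDecomp T where
  V := V
  R := S
  posR := hS
  sqR := by
    rw [hT, ← star_eq_adjoint, star_mul, hS.isSelfAdjoint.star_eq, star_eq_adjoint, mul_assoc,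
      ← mul_assoc (adjoint V), hVS]
  partIso := hV
  factor := hT
  kerV := by
    ext x
    simp only [LinearMap.mem_ker, coe_coe, hT, mul_apply_eq_comp]
    refine ⟨fun h => by rw [← hker] at h; rw [h, map_zero], fun h => ?_⟩
    rw [← hker, ← hVS, mul_apply_eq_comp, mul_apply_eq_comp, h, map_zero]

theorem R_unique (P Q : PolarDecomp T) : P.R = Q.R := by
  calc P.R = CFC.sqrt (P.R * P.R) := (CFC.sqrt_mul_self P.R P.R_nonneg).symm
    _ = CFC.sqrt (Q.R * Q.R) := by rw [P.sqR, Q.sqR]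
    _ = Q.R := CFC.sqrt_mul_self Q.R Q.R_nonneg

/-- `D = P.V - Q.V` kills the range of `R`, so the range of `D†` lies in `ker R = ker T`, which
both partial isometries annihilate; hence `D D† = 0`. -/
theorem V_unique (P Q : PolarDecomp T) : P.V = Q.V := by
  set D := P.V - Q.V
  have hDR : D * P.R = 0 := by rw [sub_mul, ← P.factor, R_unique P Q, ← Q.factor, sub_self]
  have hRD : P.R * star D = 0 := by
    simpa [star_mul, P.posR.isSelfAdjoint.star_eq] using congrArg star hDR
  have hDD : D * star D = 0 := by
    ext y
    have hT : T (star D y) = 0 :=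
      P.R_apply_eq_zero_iff.1 (by rw [← mul_apply_eq_comp, hRD, zero_apply])
    show (P.V - Q.V) (star D y) = 0
    rw [sub_apply, P.V_apply_eq_zero_iff.2 hT, Q.V_apply_eq_zero_iff.2 hT, sub_zero]
  exact sub_eq_zero.1 ((CStarRing.mul_star_self_eq_zero_iff D).1 hDD)

lemma adjoint_V_mul_V_mul_binomialConjSum (n : ℕ) :
    adjoint P.V * P.V * binomialConjSum (adjoint P.V) P.R P.V n =
      binomialConjSum (adjoint P.V) P.R P.V n :=
  mul_binomialConjSum_of_mul_eq P.adjoint_V_mul_V_mul_adjoint_V P.adjoint_V_mul_V_mul_R P.V n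

lemma binomialConjSum_nonneg (n : ℕ) : 0 ≤ binomialConjSum (adjoint P.V) P.R P.V n := by
  simpa only [star_eq_adjoint] using
    _root_.binomialConjSum_nonneg P.R_nonneg P.V n

lemma binomialConjSum_mul_adjoint_V_mul_V (n : ℕ) :
    binomialConjSum (adjoint P.V) P.R P.V n * (adjoint P.V * P.V) =
      binomialConjSum (adjoint P.V) P.R P.V n := by
  have hS := isSelfAdjoint_iff'.1 (P.binomialConjSum_nonneg n).isSelfAdjoint
  simpa only [star_mul, star_eq_adjoint, adjoint_adjoint, hS, mul_assoc]
    using congrArg star (P.adjoint_V_mul_V_mul_binomialConjSum n)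

lemma binomialConjSum_apply_eq_zero_iff (n : ℕ) {x : H} :
    binomialConjSum (adjoint P.V) P.R P.V n x = 0 ↔ P.V x = 0 := by
  refine ⟨fun h => P.V_apply_eq_zero_iff.2 (P.R_apply_eq_zero_iff.1 ?_), fun h => ?_⟩
  · refine apply_eq_zero_of_le_of_apply_eq_zero P.R_nonneg ?_ h
    simpa only [star_eq_adjoint] using le_binomialConjSum P.R_nonneg P.V n
  · rw [← P.binomialConjSum_mul_adjoint_V_mul_V n, mul_apply_eq_comp, mul_apply_eq_comp, h,
      map_zero, map_zero]

open scoped ComplexOrder in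
noncomputable def meanIterate (n : ℕ) :
    PolarDecomp (((2 : ℂ) ^ n)⁻¹ • (P.V * binomialConjSum (adjoint P.V) P.R P.V n)) :=
  ofPartialIsometry P.V (((2 : ℂ) ^ n)⁻¹ • binomialConjSum (adjoint P.V) P.R P.V n)
    (mul_smul_comm _ _ _).symm P.partIso
    (((nonneg_iff_isPositive _).1 (P.binomialConjSum_nonneg n)).smul_of_nonneg
      (inv_nonneg.2 (pow_nonneg zero_le_two n)))
    (by rw [mul_smul_comm, P.adjoint_V_mul_V_mul_binomialConjSum])
    (fun x => by simp [P.binomialConjSum_apply_eq_zero_iff])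

end PolarDecomp

theorem meanTransform_eq_mean {H : Type*} [NormedAddCommGroup H] [InnerProductSpace ℂ H]
    [CompleteSpace H] {T : H →L[ℂ] H} (P : PolarDecomp T) : meanTransform T = P.mean := by
  have h : Nonempty (PolarDecomp T) := ⟨P⟩
  rw [meanTransform, dif_pos h, PolarDecomp.mean, PolarDecomp.mean,
    PolarDecomp.V_unique h.some P, PolarDecomp.R_unique h.some P]

theorem mean_iterates_formula {H : Type*} [NormedAddCommGroup H] [InnerProductSpace ℂ H]
    [CompleteSpace H] (T : H →L[ℂ] H) (P : PolarDecomp T)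
    (hker : LinearMap.ker ((adjoint T : H →L[ℂ] H) : H →ₗ[ℂ] H) ≤ LinearMap.ker (T : H →ₗ[ℂ] H)) (n : ℕ) :
    meanTransform^[n] T = ((2 : ℂ) ^ n)⁻¹ •
      (P.V * ∑ j ∈ Finset.range (n + 1),
        (n.choose j : ℂ) • ((adjoint P.V) ^ j * P.R * P.V ^ j)) := by
  simp only [Nat.cast_smul_eq_nsmul]
  change _ = _ • (P.V * binomialConjSum (adjoint P.V) P.R P.V n)
  induction n with
  | zero => simp [binomialConjSum, ← P.factor]
  | succ n ih =>
    rw [Function.iterate_succ_apply', ih, meanTransform_eq_mean (P.meanIterate n),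
      PolarDecomp.mean]
    simp only [PolarDecomp.meanIterate, PolarDecomp.ofPartialIsometry]
    rw [mul_smul_comm, smul_mul_assoc, ← smul_add,
      mul_binomialConjSum_add_binomialConjSum_mul (P.V_mul_adjoint_V_mul_adjoint_V hker)
        (P.V_mul_adjoint_V_mul_R hker), smul_smul, pow_succ, mul_inv, mul_comm]
end

section
/- Let α = (α_i) be a sequence of strictly positive numbers converging to a limit r₀. Then the mean limit of the unilateral weighted shift W_α equals its spectral radius: ℓ(W_α) = r(W_α) = r₀. Concretely, lim_{n→∞} sup_{i∈ℕ} (1/2ⁿ) ∑_{j=0}^n C(n,j) α_{i+j} = r₀. -/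
/-!
The binomial weights `C(n, j) / 2ⁿ` put vanishing mass on every fixed initial segment of indices
`j`, so the `n`-th means of a convergent sequence converge to its limit uniformly in the starting
index `i`, and so do their suprema.

For the spectral radius, `‖Wⁿ‖ = supᵢ ∏_{j<n} |α_{i+j}|`. Once the weights are `ε`-close to `r₀`
from index `N` on, these products are at least `(r₀ - ε)ⁿ` (for `i = N`) and at most
`Cᴺ (r₀ + ε)ⁿ⁻ᴺ`, where `C` bounds all the weights. The lower bound passes to `r(W)` through
Gelfand's formula, the upper one through `|λ|ⁿ ≤ ‖Wⁿ‖` for `λ` in the spectrum.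
-/

open Filter Topology Finset
open scoped lp NNReal ENNReal

theorem sum_range_choose_cast {R : Type*} [CommSemiring R] (n : ℕ) :
    ∑ j ∈ range (n + 1), (n.choose j : R) = 2 ^ n := by
  rw [← Nat.cast_sum, Nat.sum_range_choose, Nat.cast_pow, Nat.cast_ofNat]

theorem tendsto_choose_div_two_pow (j : ℕ) :
    Tendsto (fun n : ℕ => (n.choose j : ℝ) / 2 ^ n) atTop (𝓝 0) := by
  refine squeeze_zero (fun n => by positivity) (fun n => ?_)
    (tendsto_pow_const_div_const_pow_of_one_lt j one_lt_two)
  gcongr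
  exact_mod_cast Nat.choose_le_pow n j

theorem le_of_eventually_pow_le_mul_pow {x c K : ℝ} (hc : 0 < c)
    (h : ∀ᶠ n in atTop, x ^ n ≤ K * c ^ n) : x ≤ c := by
  by_contra! hcx
  have hratio : Tendsto (fun n => (x / c) ^ n) atTop atTop :=
    tendsto_pow_atTop_atTop_of_one_lt ((one_lt_div hc).mpr hcx)
  obtain ⟨n, hn, hK⟩ := (h.and (hratio.eventually_gt_atTop K)).exists
  rw [div_pow, lt_div_iff₀ (pow_pos hc n)] at hK
  linarith

theorem prod_range_le_pow_mul_pow {f : ℕ → ℝ} {C c : ℝ} {N n : ℕ} (hf : ∀ k, 0 ≤ f k)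
    (hC : ∀ k, f k ≤ C) (hc : ∀ k, N ≤ k → f k ≤ c) (hn : N ≤ n) (i : ℕ) :
    ∏ j ∈ range n, f (i + j) ≤ C ^ N * c ^ (n - N) := by
  calc ∏ j ∈ range n, f (i + j)
      = (∏ j ∈ range N, f (i + j)) * ∏ j ∈ Ico N n, f (i + j) :=
        (prod_range_mul_prod_Ico _ hn).symm
    _ ≤ (∏ _j ∈ range N, C) * ∏ _j ∈ Ico N n, c :=
        mul_le_mul (prod_le_prod (fun _ _ => hf _) fun _ _ => hC _)
          (prod_le_prod (fun _ _ => hf _) fun j hj => hc _ (le_add_left (mem_Ico.mp hj).1))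
          (prod_nonneg fun _ _ => hf _) (prod_nonneg fun _ _ => (hf 0).trans (hC 0))
    _ = C ^ N * c ^ (n - N) := by simp

theorem tendsto_ciSup_of_tendstoUniformly {ι : Type*} [Nonempty ι] {l : Filter ℕ}
    {F : ℕ → ι → ℝ} {c : ℝ} (h : TendstoUniformly F (fun _ => c) l) :
    Tendsto (fun n => ⨆ i, F n i) l (𝓝 c) := by
  refine Metric.tendsto_nhds.mpr fun ε hε => ?_
  filter_upwards [Metric.tendstoUniformly_iff.mp h (ε / 2) (half_pos hε)] with n hn
  have hclose : ∀ i, |F n i - c| < ε / 2 := fun i => by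
    simpa [Real.dist_eq, abs_sub_comm] using hn i
  have hle : ⨆ i, F n i ≤ c + ε / 2 :=
    ciSup_le fun i => by linarith [(abs_lt.mp (hclose i)).2]
  have hge : F n (Classical.arbitrary ι) ≤ ⨆ i, F n i :=
    le_ciSup ⟨c + ε / 2, Set.forall_mem_range.mpr fun i => by
      linarith [(abs_lt.mp (hclose i)).2]⟩ _
  rw [Real.dist_eq, abs_lt]
  constructor <;> linarith [(abs_lt.mp (hclose (Classical.arbitrary ι))).1]

/-- `binomialMean α n i` is the weight `α_i^{(n)}` of the `n`-th mean iterate `Ŵ_α^{(n)}`. -/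
noncomputable def binomialMean (a : ℕ → ℝ) (n i : ℕ) : ℝ :=
  ((2 : ℝ) ^ n)⁻¹ * ∑ j ∈ range (n + 1), (n.choose j : ℝ) * a (i + j)

theorem binomialMean_sub_const (a : ℕ → ℝ) (c : ℝ) (n i : ℕ) :
    binomialMean (fun k => a k - c) n i = binomialMean a n i - c := by
  simp only [binomialMean, mul_sub, sum_sub_distrib, ← sum_mul, sum_range_choose_cast]
  field_simp

theorem abs_binomialMean_le {a : ℕ → ℝ} {M ε : ℝ} {N : ℕ} (hM : ∀ k, |a k| ≤ M)
    (hε : ∀ k, N ≤ k → |a k| ≤ ε) (n i : ℕ) :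
    |binomialMean a n i| ≤ ε + M * ∑ j ∈ range N, (n.choose j : ℝ) / 2 ^ n := by
  have hterm : ∀ j, |a (i + j)| ≤ ε + if j < N then M else 0 := fun j => by
    split_ifs with hj
    · linarith [hM (i + j), (abs_nonneg (a N)).trans (hε N le_rfl)]
    · simpa using hε (i + j) (by omega)
  have hhead : ∑ j ∈ range (n + 1), (n.choose j : ℝ) * (if j < N then M else 0)
      ≤ (∑ j ∈ range N, (n.choose j : ℝ)) * M := by
    simp only [mul_ite, mul_zero, ← sum_filter, sum_mul]
    refine sum_le_sum_of_subset_of_nonneg (fun j hj => ?_) fun j _ _ => ?_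
    · simpa using (mem_filter.mp hj).2
    · exact mul_nonneg (Nat.cast_nonneg _) ((abs_nonneg _).trans (hM 0))
  rw [binomialMean, abs_mul, abs_inv, abs_pow, abs_two, inv_mul_le_iff₀ (by positivity)]
  calc |∑ j ∈ range (n + 1), (n.choose j : ℝ) * a (i + j)|
      ≤ ∑ j ∈ range (n + 1), (n.choose j : ℝ) * (ε + if j < N then M else 0) := by
        refine (abs_sum_le_sum_abs _ _).trans (sum_le_sum fun j _ => ?_)
        rw [abs_mul, Nat.abs_cast]
        exact mul_le_mul_of_nonneg_left (hterm j) (Nat.cast_nonneg _)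
    _ ≤ 2 ^ n * ε + M * ∑ j ∈ range N, (n.choose j : ℝ) := by
        simp only [mul_add, sum_add_distrib, ← sum_mul, sum_range_choose_cast]
        linarith
    _ = 2 ^ n * (ε + M * ∑ j ∈ range N, (n.choose j : ℝ) / 2 ^ n) := by
        rw [← sum_div]
        field_simp

theorem tendstoUniformly_binomialMean {a : ℕ → ℝ} {c : ℝ} (ha : Tendsto a atTop (𝓝 c)) :
    TendstoUniformly (binomialMean a) (fun _ => c) atTop := by
  obtain ⟨M, hM⟩ : ∃ M, ∀ k, |a k - c| ≤ M := by
    obtain ⟨M, hM⟩ := (ha.sub_const c).abs.bddAbove_range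
    exact ⟨M, fun k => hM ⟨k, rfl⟩⟩
  refine Metric.tendstoUniformly_iff.mpr fun ε hε => ?_
  obtain ⟨N, hN⟩ := Metric.tendsto_atTop.mp ha (ε / 2) (half_pos hε)
  have htail : Tendsto (fun n => M * ∑ j ∈ range N, (n.choose j : ℝ) / 2 ^ n) atTop (𝓝 0) := by
    simpa using (tendsto_finsetSum _ fun j _ => tendsto_choose_div_two_pow j).const_mul M
  filter_upwards [htail.eventually (gt_mem_nhds (half_pos hε))] with n hn i
  have hmean := abs_binomialMean_le hM (fun k hk => (hN k hk).le) n i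
  rw [binomialMean_sub_const] at hmean
  rw [Real.dist_eq, abs_sub_comm]
  linarith

section SpectralRadius

variable {A : Type*} [NormedRing A] [NormedAlgebra ℂ A] [CompleteSpace A]

theorem spectralRadius_le_of_norm_pow_le {a : A} {K : ℝ} {c : ℝ≥0} (hc : 0 < c)
    (h : ∀ᶠ n in atTop, ‖a ^ n‖ ≤ K * c ^ n) : spectralRadius ℂ a ≤ c := by
  refine iSup₂_le fun k hk => ?_
  rw [ENNReal.coe_le_coe, ← NNReal.coe_le_coe, coe_nnnorm]
  refine le_of_eventually_pow_le_mul_pow (K := K * ‖(1 : A)‖) hc ?_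
  filter_upwards [h] with n hn
  calc ‖k‖ ^ n = ‖k ^ n‖ := (norm_pow k n).symm
    _ ≤ ‖a ^ n‖ * ‖(1 : A)‖ := spectrum.norm_le_norm_mul_of_mem (spectrum.pow_mem_pow a n hk)
    _ ≤ K * ‖(1 : A)‖ * c ^ n := by
        rw [mul_right_comm]
        exact mul_le_mul_of_nonneg_right hn (norm_nonneg _)

theorem le_spectralRadius_of_pow_le_norm_pow {a : A} {c : ℝ≥0}
    (h : ∀ᶠ n in atTop, (c : ℝ) ^ n ≤ ‖a ^ n‖) : (c : ℝ≥0∞) ≤ spectralRadius ℂ a := by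
  refine ge_of_tendsto (spectrum.pow_nnnorm_pow_one_div_tendsto_nhds_spectralRadius a) ?_
  filter_upwards [h, eventually_ne_atTop 0] with n hn hn0
  rw [← ENNReal.coe_rpow_of_nonneg _ (by positivity), ENNReal.coe_le_coe, one_div,
    ← NNReal.pow_rpow_inv_natCast c hn0]
  exact NNReal.rpow_le_rpow (by exact_mod_cast hn) (by positivity)

end SpectralRadius

theorem lp.orthonormal_single {ι 𝕜 : Type*} [RCLike 𝕜] [DecidableEq ι] :
    Orthonormal 𝕜 (fun i => lp.single 2 i (1 : 𝕜) : ι → ℓ²(ι, 𝕜)) := by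
  rw [orthonormal_iff_ite]
  intro i j
  rw [lp.inner_single_left, lp.single_apply, Pi.single_apply]
  split_ifs <;> simp_all

theorem lp.opNorm_le_of_apply_single {ι 𝕜 : Type*} [RCLike 𝕜] [DecidableEq ι]
    (T : ℓ²(ι, 𝕜) →L[𝕜] ℓ²(ι, 𝕜)) {σ : ι → ι} (hσ : σ.Injective) {γ : ι → 𝕜} {B : ℝ}
    (hB : 0 ≤ B) (hγ : ∀ i, ‖γ i‖ ≤ B)
    (hT : ∀ i, T (lp.single 2 i 1) = γ i • lp.single 2 (σ i) 1) : ‖T‖ ≤ B := by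
  refine T.opNorm_le_bound hB fun x => ?_
  let s : Finset ι → ℓ²(ι, 𝕜) := fun F => ∑ i ∈ F, x i • lp.single 2 i 1
  have hs : Tendsto s atTop (𝓝 x) := by
    have hx : Tendsto (fun F => ∑ i ∈ F, lp.single 2 i (x i)) atTop (𝓝 x) :=
      lp.hasSum_single (by norm_num) x
    convert hx with F i
    rw [← lp.single_smul, smul_eq_mul, mul_one]
  have hbound : ∀ F, ‖T (s F)‖ ≤ B * ‖s F‖ := fun F => by
    have hTs : ‖T (s F)‖ ^ 2 = ∑ i ∈ F, ‖x i * γ i‖ ^ 2 := by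
      simpa [s, map_sum, hT, smul_smul] using
        (lp.orthonormal_single.comp σ hσ).orthogonalFamily.norm_sum (fun i => x i * γ i) F
    have hs : ‖s F‖ ^ 2 = ∑ i ∈ F, ‖x i‖ ^ 2 := by
      simpa [s] using lp.orthonormal_single.orthogonalFamily.norm_sum x F
    refine (pow_le_pow_iff_left₀ (norm_nonneg _) (by positivity) two_ne_zero).mp ?_
    rw [hTs, mul_pow, hs, mul_sum]
    refine sum_le_sum fun i _ => ?_
    rw [norm_mul, mul_pow, mul_comm]
    gcongr
    exact hγ i
  exact le_of_tendsto_of_tendsto' ((T.continuous.tendsto x).comp hs).norm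
    (hs.norm.const_mul B) hbound

def IsWeightedShift {𝕜 : Type*} [RCLike 𝕜] (W : ℓ²(ℕ, 𝕜) →L[𝕜] ℓ²(ℕ, 𝕜)) (w : ℕ → 𝕜) :
    Prop :=
  ∀ i, W (lp.single 2 i 1) = w i • lp.single 2 (i + 1) 1

namespace IsWeightedShift

section RCLike

variable {𝕜 : Type*} [RCLike 𝕜] {W : ℓ²(ℕ, 𝕜) →L[𝕜] ℓ²(ℕ, 𝕜)} {w : ℕ → 𝕜}

theorem pow_apply_single (hW : IsWeightedShift W w) (n i : ℕ) :
    (W ^ n) (lp.single 2 i 1) = (∏ j ∈ range n, w (i + j)) • lp.single 2 (i + n) 1 := by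
  induction n generalizing i with
  | zero => simp
  | succ n ih =>
    rw [pow_succ', mul_apply_eq_comp, ih, map_smul, hW, smul_smul, prod_range_succ,
      mul_comm, add_assoc]

theorem prod_norm_le_norm_pow (hW : IsWeightedShift W w) (n i : ℕ) :
    ∏ j ∈ range n, ‖w (i + j)‖ ≤ ‖W ^ n‖ := by
  simpa [hW.pow_apply_single, norm_smul, lp.norm_single, norm_prod] using
    (W ^ n).le_opNorm (lp.single 2 i 1)

theorem norm_pow_le (hW : IsWeightedShift W w) {n : ℕ} {B : ℝ}
    (h : ∀ i, ∏ j ∈ range n, ‖w (i + j)‖ ≤ B) : ‖W ^ n‖ ≤ B :=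
  lp.opNorm_le_of_apply_single (W ^ n) (add_left_injective n)
    ((prod_nonneg fun _ _ => norm_nonneg _).trans (h 0))
    (fun i => (norm_prod _ _).trans_le (h i)) (hW.pow_apply_single n)

end RCLike

theorem spectralRadius_eq_nnnorm {W : ℓ²(ℕ, ℂ) →L[ℂ] ℓ²(ℕ, ℂ)} {w : ℕ → ℂ} {w₀ : ℂ}
    (hW : IsWeightedShift W w) (hw : Tendsto w atTop (𝓝 w₀)) :
    spectralRadius ℂ W = ‖w₀‖₊ := by
  have hnorm : Tendsto (fun k => ‖w k‖) atTop (𝓝 ‖w₀‖) := hw.norm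
  refine le_antisymm (ENNReal.le_of_forall_pos_le_add fun ε hε _ => ?_)
    (ENNReal.le_of_forall_nnreal_lt fun c hc => ?_)
  · obtain ⟨C, hC⟩ := hnorm.bddAbove_range
    set c := ‖w₀‖₊ + ε
    have hc : ‖w₀‖ < c := by simpa [c] using hε
    obtain ⟨N, hN⟩ := eventually_atTop.mp (hnorm.eventually (ge_mem_nhds hc))
    rw [← ENNReal.coe_add]
    refine spectralRadius_le_of_norm_pow_le (K := C ^ N / c ^ N) (by positivity) ?_
    filter_upwards [eventually_ge_atTop N] with n hn
    calc ‖W ^ n‖ ≤ C ^ N * c ^ (n - N) :=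
          hW.norm_pow_le (prod_range_le_pow_mul_pow (fun _ => norm_nonneg _)
            (fun k => hC ⟨k, rfl⟩) hN hn)
      _ = C ^ N / c ^ N * c ^ n := by
          rw [pow_sub₀ _ (by positivity) hn]
          ring
  · have hc : (c : ℝ) < ‖w₀‖ := by exact_mod_cast hc
    obtain ⟨N, hN⟩ := eventually_atTop.mp (hnorm.eventually (lt_mem_nhds hc))
    refine le_spectralRadius_of_pow_le_norm_pow (Eventually.of_forall fun n => ?_)
    calc (c : ℝ) ^ n = ∏ _j ∈ range n, (c : ℝ) := by simp
      _ ≤ ∏ j ∈ range n, ‖w (N + j)‖ :=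
          prod_le_prod (fun _ _ => c.2) fun j _ => (hN (N + j) le_self_add).le
      _ ≤ ‖W ^ n‖ := hW.prod_norm_le_norm_pow n N

end IsWeightedShift

theorem mean_limit_of_convergent_weights
    (α : ℕ → ℝ) (hpos : ∀ i, 0 < α i) (r₀ : ℝ) (hlim : Tendsto α atTop (nhds r₀))
    (W : lp (fun _ : ℕ => ℂ) 2 →L[ℂ] lp (fun _ : ℕ => ℂ) 2)
    (hW : ∀ i : ℕ, W (lp.single 2 i 1) = (α i : ℂ) • lp.single 2 (i + 1) 1) :
    Tendsto
      (fun n : ℕ => ⨆ i : ℕ,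
        ((2 : ℝ) ^ n)⁻¹ * ∑ j ∈ Finset.range (n + 1), (n.choose j : ℝ) * α (i + j))
      atTop (nhds r₀) ∧
    (spectralRadius ℂ W).toReal = r₀ := by
  have hr₀ : 0 ≤ r₀ := ge_of_tendsto' hlim fun i => (hpos i).le
  refine ⟨tendsto_ciSup_of_tendstoUniformly (tendstoUniformly_binomialMean hlim), ?_⟩
  have hshift : IsWeightedShift W (fun i => (α i : ℂ)) := hW
  rw [hshift.spectralRadius_eq_nnnorm ((Complex.continuous_ofReal.tendsto r₀).comp hlim)]
  simp [abs_of_nonneg hr₀]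
end
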